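/- Fix n ≥ 3, 2 ≤ i ≤ n−1, and α, β ≥ 0 with α ≤ c + 2(−1+ε)β. Let x ∈ ℝ^n with y := Wx + θ satisfy: y_i = α; y_{i−1} ≤ β and y_{i+1} ≤ β; and y_k ≤ 0 for all k ∉ {i−1, i, i+1}. Then the i-th component of W applied to the vector field, namely w_i^⊤(−x + [y]_+) where w_i^⊤ is the i-th row of W, satisfies w_i^⊤(−x + [y]_+) = c − α + (−1+ε)([y_{i−1}]_+ + [y_{i+1}]_+) ≥ 0. (This shows the vector field points inward on the boundary {y_i = α} of the forward-invariant set R_FI^{(i)}.) -/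

import Mathlib

open Matrix

/-! Since `y = W x + c`, the term `-w_iᵀ x` equals `c - y_i = c - α`. In `w_iᵀ [y]_+` only the two
neighbours of `i` survive: `W_ii = 0`, and every other `k` has `y_k ≤ 0`, so `[y_k]_+ = 0`. This
gives the formula; nonnegativity follows because `-1 + ε < 0` and `[y_{i±1}]_+ ≤ β`, so the
feasibility bound `α ≤ c + 2(-1 + ε)β` is exactly what is needed. -/

theorem sum_mul_neg_add_max_eq {ι : Type*} [Fintype ι] (W : Matrix ι ι ℝ) (c : ℝ)
    (x y : ι → ℝ) (hy : ∀ k, y k = (W *ᵥ x) k + c) (i : ι) :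
    ∑ j, W i j * (-(x j) + max (y j) 0) = c - y i + ∑ j, W i j * max (y j) 0 := by
  have hWx : ∑ j, W i j * x j = y i - c := by
    rw [hy i, mulVec, dotProduct, add_sub_cancel_right]
  simp only [mul_add, mul_neg, Finset.sum_add_distrib, Finset.sum_neg_distrib, hWx]
  ring

theorem sum_mul_max_eq_of_nonpos_off {ι : Type*} [Fintype ι] (w y : ι → ℝ) {a b : ι}
    (hab : a ≠ b) (hoff : ∀ j, j ≠ a → j ≠ b → w j = 0 ∨ y j ≤ 0) :
    ∑ j, w j * max (y j) 0 = w a * max (y a) 0 + w b * max (y b) 0 := by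
  refine Fintype.sum_eq_add a b hab fun j ⟨hja, hjb⟩ => ?_
  rcases hoff j hja hjb with hw | hy
  · rw [hw, zero_mul]
  · rw [max_eq_right hy, mul_zero]

section CSTLN

variable {n : ℕ} {ε δ : ℝ} {W : Matrix (Fin n) (Fin n) ℝ}
  (hW : ∀ k l : Fin n, W k l =
    if (k : ℕ) = (l : ℕ) then 0
    else if ((k : ℤ) - (l : ℤ)).natAbs = 1 then -1 + ε else -1 - δ)
include hW

theorem cstln_diag (k : Fin n) : W k k = 0 := by
  rw [hW, if_pos rfl]

theorem cstln_adjacent {k l : Fin n} (hkl : (k : ℕ) = l + 1 ∨ (l : ℕ) = k + 1) :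
    W k l = -1 + ε := by
  rw [hW, if_neg (by omega), if_pos (by omega)]

end CSTLN

/-- Indices are 0-based: `1 ≤ i` and `i + 1 < n` correspond to the 1-based `2 ≤ i ≤ n−1`. -/
theorem cstln_inward_on_yi_boundary (n i : ℕ)
    (hi1 : 1 ≤ i) (hi2 : i + 1 < n)
    (ε δ c : ℝ) (hε1 : ε < 1)
    (W : Matrix (Fin n) (Fin n) ℝ)
    (hW : ∀ k l : Fin n, W k l =
      if (k : ℕ) = (l : ℕ) then 0
      else if ((k : ℤ) - (l : ℤ)).natAbs = 1 then -1 + ε else -1 - δ)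
    (α β : ℝ) (hβ : 0 ≤ β)
    (hfeas : α ≤ c + 2 * (-1 + ε) * β)
    (x y : Fin n → ℝ) (hy : ∀ k, y k = W.mulVec x k + c)
    (hyi : y ⟨i, by omega⟩ = α)
    (hym : y ⟨i - 1, by omega⟩ ≤ β)
    (hyp : y ⟨i + 1, by omega⟩ ≤ β)
    (hoff : ∀ k : Fin n, (k : ℕ) ≠ i - 1 → (k : ℕ) ≠ i → (k : ℕ) ≠ i + 1 → y k ≤ 0) :
    (∑ j, W ⟨i, by omega⟩ j * (-(x j) + max (y j) 0)) =
      c - α + (-1 + ε) * (max (y ⟨i - 1, by omega⟩) 0 + max (y ⟨i + 1, by omega⟩) 0) ∧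
    0 ≤ ∑ j, W ⟨i, by omega⟩ j * (-(x j) + max (y j) 0) := by
  have hvanish : ∀ j : Fin n, j ≠ ⟨i - 1, by omega⟩ → j ≠ ⟨i + 1, by omega⟩ →
      W ⟨i, by omega⟩ j = 0 ∨ y j ≤ 0 := by
    intro j hjm hjp
    by_cases hji : (j : ℕ) = i
    · rw [show j = ⟨i, by omega⟩ from Fin.ext hji]
      exact .inl (cstln_diag hW _)
    · exact .inr (hoff j (Fin.val_ne_iff.2 hjm) hji (Fin.val_ne_iff.2 hjp))
  have key : ∑ j, W ⟨i, by omega⟩ j * (-(x j) + max (y j) 0) =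
      c - α + (-1 + ε) * (max (y ⟨i - 1, by omega⟩) 0 + max (y ⟨i + 1, by omega⟩) 0) := by
    rw [sum_mul_neg_add_max_eq W c x y hy, hyi,
      sum_mul_max_eq_of_nonpos_off _ y (by simp [Fin.ext_iff]) hvanish,
      cstln_adjacent hW (by simp; omega), cstln_adjacent hW (by simp)]
    ring
  have hm : max (y ⟨i - 1, by omega⟩) 0 ≤ β := max_le hym hβ
  have hp : max (y ⟨i + 1, by omega⟩) 0 ≤ β := max_le hyp hβ
  refine ⟨key, key ▸ ?_⟩
  nlinarith
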